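/- arXiv:math/0604026 — 2 statements merged into one kernel-verified Lean document; each statement's English description precedes it below -/
import Mathlib

section
/- For every odd positive integer n, the function F_n(x) = Σ_{m=0}^n ((−n)_m (1/2)_m / ((1)_m m!)) x^m is monotone decreasing on the interval [1,2], F_n(2) = 0, and for every x ∈ [1,2] one has 0 ≤ F_n(x) ≤ (1/2)_n/n! ≤ 1. -/
open Real Finset

/-- Pochhammer symbol `(a)_n = a (a+1) ⋯ (a+n-1)`. -/
noncomputable def poch (a : ℝ) (n : ℕ) : ℝ := ∏ i ∈ Finset.range n, (a + i)

/-- Terminating Gauss hypergeometric function `₂F₁(-n, 1/2; 1; x)`. -/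
noncomputable def F2F1 (n : ℕ) (x : ℝ) : ℝ :=
  ∑ m ∈ Finset.range (n + 1),
    poch (-(n : ℝ)) m * poch (1/2) m / (poch 1 m * (Nat.factorial m : ℝ)) * x ^ m

/-!
Expanding the binomial and using Wallis' integrals `∫₀^π sin^{2m} u du = π (1/2)_m / m!` gives
`π F_n(x) = ∫₀^π (1 - x sin² u)^n du`. For odd `n` the integrand is strictly decreasing in `x`.
At `x = 2` it is `cos(2u)^n`, which changes sign under `u ↦ u + π/2` and so integrates to `0`;
at `x = 1` it is `cos^{2n} u`, whose integral is again Wallis' `π (1/2)_n / n!`.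
-/

open scoped Nat

open intervalIntegral in
theorem Function.Antiperiodic.intervalIntegral_add_two_mul_eq_zero {E : Type*}
    [NormedAddCommGroup E] [NormedSpace ℝ E] {f : ℝ → E} {c : ℝ}
    (hf : Function.Antiperiodic f c) {a : ℝ}
    (hint : IntervalIntegrable f MeasureTheory.volume a (a + c)) :
    ∫ x in a..a + 2 * c, f x = 0 := by
  rw [two_mul, ← add_assoc]
  have hint' : IntervalIntegrable f MeasureTheory.volume (a + c) (a + c + c) :=
    (IntervalIntegrable.comp_add_right_iff).mp <| by
      simpa only [hf _] using (show IntervalIntegrable (fun x => -f x) _ a (a + c) from hint.neg)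
  rw [← integral_add_adjacent_intervals hint hint', ← integral_comp_add_right]
  simp only [hf _, integral_neg, add_neg_cancel]

noncomputable def wallisRatio (m : ℕ) : ℝ := ∏ i ∈ range m, (2 * (i : ℝ) + 1) / (2 * i + 2)

lemma wallisRatio_le_one (m : ℕ) : wallisRatio m ≤ 1 :=
  prod_le_one (fun _ _ => by positivity) fun _ _ => (div_le_one (by positivity)).mpr (by linarith)

lemma poch_one (m : ℕ) : poch 1 m = m ! := by
  induction m with
  | zero => simp [poch]
  | succ k ih =>
    rw [poch, prod_range_succ, ← poch, ih, Nat.factorial_succ]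
    push_cast
    ring

lemma poch_one_half (m : ℕ) : poch (1 / 2) m = wallisRatio m * m ! := by
  induction m with
  | zero => simp [poch, wallisRatio]
  | succ k ih =>
    rw [poch, prod_range_succ, ← poch, ih, wallisRatio, wallisRatio, prod_range_succ,
      Nat.factorial_succ]
    push_cast
    field_simp
    ring

lemma poch_neg_natCast {n m : ℕ} (h : m ≤ n) :
    poch (-n) m = (-1) ^ m * m ! * n.choose m := by
  have hfactor : ∀ i ∈ range m, -(n : ℝ) + i = -1 * ((n - i : ℕ) : ℝ) := fun i hi => by
    rw [Nat.cast_sub (by grind)]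
    ring
  rw [poch, prod_congr rfl hfactor, prod_mul_distrib, prod_const, card_range, ← Nat.cast_prod,
    ← Nat.descFactorial_eq_prod_range, Nat.descFactorial_eq_factorial_mul_choose]
  push_cast
  ring

lemma F2F1_eq_sum (n : ℕ) (x : ℝ) :
    F2F1 n x = ∑ m ∈ range (n + 1), (-1) ^ m * n.choose m * wallisRatio m * x ^ m := by
  refine sum_congr rfl fun m hm => ?_
  rw [poch_neg_natCast (Nat.lt_succ_iff.mp (mem_range.mp hm)), poch_one_half, poch_one]
  have : (m ! : ℝ) ≠ 0 := by positivity
  field_simp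

lemma F2F1_eq_integral (n : ℕ) (x : ℝ) :
    F2F1 n x = π⁻¹ * ∫ u in 0..π, (1 - x * sin u ^ 2) ^ n := by
  have hexpand : ∀ u, (1 - x * sin u ^ 2) ^ n
      = ∑ m ∈ range (n + 1), (-1) ^ m * n.choose m * x ^ m * sin u ^ (2 * m) := fun u => by
    rw [sub_eq_neg_add, add_pow]
    refine sum_congr rfl fun m _ => ?_
    rw [neg_pow, mul_pow, pow_mul]
    ring
  simp_rw [hexpand]
  rw [intervalIntegral.integral_finsetSum
    fun m _ => (by fun_prop : Continuous _).intervalIntegrable _ _, F2F1_eq_sum, mul_sum]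
  refine sum_congr rfl fun m _ => ?_
  rw [intervalIntegral.integral_const_mul, integral_sin_pow_even, ← wallisRatio]
  field_simp

lemma integral_one_sub_two_mul_sin_sq_pow {n : ℕ} (hn : Odd n) :
    ∫ u in 0..π, (1 - 2 * sin u ^ 2) ^ n = 0 := by
  have hanti : Function.Antiperiodic (fun u => (1 - 2 * sin u ^ 2) ^ n) (π / 2) := fun u => by
    dsimp only
    rw [sin_add_pi_div_two, ← hn.neg_pow, cos_sq']
    ring
  have hint : IntervalIntegrable (fun u => (1 - 2 * sin u ^ 2) ^ n) MeasureTheory.volume 0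
      (0 + π / 2) :=
    (by fun_prop : Continuous _).intervalIntegrable _ _
  simpa [mul_div_cancel₀] using hanti.intervalIntegral_add_two_mul_eq_zero hint

lemma integral_one_sub_sin_sq_pow (n : ℕ) :
    ∫ u in 0..π, (1 - sin u ^ 2) ^ n = π * wallisRatio n := by
  have hperiodic : Function.Periodic (fun u => sin u ^ (2 * n)) π := fun u => by
    simp [sin_add_pi, pow_mul]
  have hcos : ∀ u, (1 - sin u ^ 2) ^ n = sin (u + π / 2) ^ (2 * n) := fun u => by
    rw [sin_add_pi_div_two, pow_mul, cos_sq']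
  simp_rw [hcos]
  rw [intervalIntegral.integral_comp_add_right (fun u => sin u ^ (2 * n)), zero_add, add_comm π,
    hperiodic.intervalIntegral_add_eq (π / 2) 0, zero_add, integral_sin_pow_even, wallisRatio]

lemma strictAnti_integral_one_sub_mul_sin_sq_pow {n : ℕ} (hn : Odd n) :
    StrictAnti fun x : ℝ => ∫ u in 0..π, (1 - x * sin u ^ 2) ^ n := by
  intro x y hxy
  refine intervalIntegral.integral_lt_integral_of_continuousOn_of_le_of_exists_lt pi_pos
    (by fun_prop) (by fun_prop) (fun u _ => hn.strictMono_pow.monotone ?_) ⟨π / 2, ?_, ?_⟩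
  · nlinarith [sq_nonneg (sin u)]
  · constructor <;> linarith [pi_pos]
  · apply hn.strictMono_pow
    simp only [sin_pi_div_two]
    linarith

theorem stmt5_general (n : ℕ) (hodd : Odd n) :
    StrictAntiOn (F2F1 n) (Set.Icc 1 2)
    ∧ F2F1 n 2 = 0
    ∧ ∀ x ∈ Set.Icc (1:ℝ) 2,
        0 ≤ F2F1 n x ∧ F2F1 n x ≤ poch (1/2) n / (Nat.factorial n : ℝ)
          ∧ poch (1/2) n / (Nat.factorial n : ℝ) ≤ 1 := by
  have hanti : StrictAnti (F2F1 n) := fun x y hxy => by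
    simp only [F2F1_eq_integral]
    gcongr
    exact strictAnti_integral_one_sub_mul_sin_sq_pow hodd hxy
  have hzero : F2F1 n 2 = 0 := by
    rw [F2F1_eq_integral, integral_one_sub_two_mul_sin_sq_pow hodd, mul_zero]
  have hone : F2F1 n 1 = poch (1 / 2) n / n ! := by
    rw [F2F1_eq_integral, poch_one_half]
    simp only [one_mul, integral_one_sub_sin_sq_pow]
    field_simp
  refine ⟨hanti.strictAntiOn _, hzero, fun x hx => ⟨?_, ?_, ?_⟩⟩
  · exact hzero ▸ hanti.antitone hx.2
  · exact hone ▸ hanti.antitone hx.1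
  · rw [poch_one_half, mul_div_cancel_right₀ _ (by positivity)]
    exact wallisRatio_le_one n

theorem stmt5 (n : ℕ) (hodd : Odd n) (hpos : 0 < n) :
    StrictAntiOn (F2F1 n) (Set.Icc 1 2)
    ∧ F2F1 n 2 = 0
    ∧ ∀ x ∈ Set.Icc (1:ℝ) 2,
        0 ≤ F2F1 n x ∧ F2F1 n x ≤ poch (1/2) n / (Nat.factorial n : ℝ)
          ∧ poch (1/2) n / (Nat.factorial n : ℝ) ≤ 1 :=
  stmt5_general n hodd
end

section
/- For every real x with 0 < x < 1, the series Σ_{j=1}^∞ ((1/2)_j/(j·j!)) x^j converges and Σ_{j=1}^∞ ((1/2)_j/(j·j!)) x^j = 2·ln(2/(1+√(1−x))). Consequently, for 0 < x < 1, Σ_{j=1}^∞ ((1/2)_j/(j·j!)) (−x)^j = −2·ln((1+√(1+x))/2). -/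
/-!
The coefficients `(1/2)_n / n!` are those of the binomial series of `(1 - y)^(-1/2)`. Dropping
the constant term and dividing by `y` gives
`∑ (1/2)_(n+1) / (n+1)! y^n = 1 / (√(1-y) (1 + √(1-y)))`, which is the derivative of
`-2 log((1 + √(1-y)) / 2)`. Integrating termwise from `0`, where both sides vanish, sums the
series for `|y| < 1`; the two claims are the cases `y = x` and `y = -x`.
-/

open Real Finset

open scoped Nat

lemma poch_eq_ascPochhammer_eval (a : ℝ) (n : ℕ) : poch a n = (ascPochhammer ℝ n).eval a := by
  induction n with
  | zero => simp [poch]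
  | succ n ih => rw [poch, prod_range_succ, ← poch, ih, ascPochhammer_succ_eval]

lemma poch_div_factorial_eq_choose (a : ℝ) (n : ℕ) :
    poch a n / n ! = Ring.choose (a + n - 1) n := by
  rw [← Ring.multichoose_eq, div_eq_iff (by positivity), poch_eq_ascPochhammer_eval, mul_comm,
    ← nsmul_eq_mul, Ring.factorial_nsmul_multichoose_eq_ascPochhammer,
    Polynomial.ascPochhammer_smeval_eq_eval]

lemma poch_zero (a : ℝ) : poch a 0 = 1 := prod_range_zero _

lemma poch_nonneg {a : ℝ} (ha : 0 ≤ a) (n : ℕ) : 0 ≤ poch a n :=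
  prod_nonneg fun _ _ => by positivity

lemma poch_le_factorial {a : ℝ} (h0 : 0 ≤ a) (h1 : a ≤ 1) (n : ℕ) : poch a n ≤ n ! := by
  rw [← prod_range_add_one_eq_factorial, Nat.cast_prod]
  exact prod_le_prod (fun _ _ => by positivity) fun i _ => by push_cast; linarith

lemma abs_poch_div_factorial_le_one {a : ℝ} (h0 : 0 ≤ a) (h1 : a ≤ 1) (n : ℕ) :
    |poch a n / n !| ≤ 1 := by
  rw [abs_of_nonneg (by have := poch_nonneg h0 n; positivity)]
  exact div_le_one_of_le₀ (poch_le_factorial h0 h1 n) (by positivity)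

theorem hasSum_poch_div_factorial_mul_pow (a : ℝ) {y : ℝ} (hy : |y| < 1) :
    HasSum (fun n => poch a n / n ! * y ^ n) (1 / (1 - y) ^ a) := by
  have := (one_div_one_sub_rpow_hasFPowerSeriesOnBall_zero a).hasSum (y := y)
    (by simpa [enorm_eq_nnnorm, ← NNReal.coe_lt_coe] using hy)
  simpa [poch_div_factorial_eq_choose, FormalMultilinearSeries.ofScalars_apply_eq, mul_comm]
    using this

theorem hasDerivAt_tsum_div_succ_mul_pow_succ {a : ℕ → ℝ} {C : ℝ} (ha : ∀ n, |a n| ≤ C)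
    {y : ℝ} (hy : |y| < 1) :
    HasDerivAt (fun z => ∑' n : ℕ, a n / (n + 1) * z ^ (n + 1))
      (∑' n : ℕ, a n * y ^ n) y := by
  obtain ⟨r, hyr, hr1⟩ := exists_between hy
  have hr0 : 0 ≤ r := (abs_nonneg y).trans hyr.le
  have hball (z : ℝ) : z ∈ Metric.ball 0 r ↔ |z| < r := by
    rw [mem_ball_zero_iff, Real.norm_eq_abs]
  refine hasDerivAt_tsum_of_isPreconnected (g := fun n z => a n / (n + 1) * z ^ (n + 1))
    (g' := fun n z => a n * z ^ n) (u := fun n => C * r ^ n)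
    ((summable_geometric_of_lt_one hr0 hr1).mul_left C) Metric.isOpen_ball
    (convex_ball 0 r).isPreconnected (fun n z _ => ?_) (fun n z hz => ?_)
    (Metric.mem_ball_self ((abs_nonneg y).trans_lt hyr)) ?_ ((hball y).2 hyr)
  · refine ((hasDerivAt_pow (n + 1) z).const_mul _).congr_deriv ?_
    rw [Nat.add_sub_cancel, Nat.cast_succ]
    field_simp
  · rw [Real.norm_eq_abs, abs_mul, abs_pow]
    exact mul_le_mul (ha n) (pow_le_pow_left₀ (abs_nonneg z) ((hball z).1 hz).le n)
      (by positivity) ((abs_nonneg _).trans (ha 0))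
  · simp

theorem summable_div_succ_mul_pow_succ {a : ℕ → ℝ} {C : ℝ} (ha : ∀ n, |a n| ≤ C)
    {y : ℝ} (hy : |y| < 1) : Summable fun n : ℕ => a n / (n + 1) * y ^ (n + 1) := by
  refine .of_norm_bounded ((summable_geometric_of_lt_one (abs_nonneg y) hy).mul_left C) fun n => ?_
  rw [Real.norm_eq_abs, abs_mul, abs_div, abs_pow, pow_succ,
    abs_of_pos (by positivity : (0 : ℝ) < n + 1)]
  have hcoeff : |a n| / (n + 1) ≤ C :=
    (div_le_self (abs_nonneg _) (by linarith [n.cast_nonneg (α := ℝ)])).trans (ha n)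
  exact mul_le_mul hcoeff (mul_le_of_le_one_right (by positivity) hy.le) (by positivity)
    ((abs_nonneg _).trans (ha n))

theorem hasSum_poch_half_succ_div_factorial_mul_pow {y : ℝ} (hy : |y| < 1) :
    HasSum (fun n : ℕ => poch (1 / 2) (n + 1) / (n + 1)! * y ^ n)
      (1 / (√(1 - y) * (1 + √(1 - y)))) := by
  have hS := hasSum_poch_div_factorial_mul_pow (1 / 2) hy
  rw [← sqrt_eq_rpow] at hS
  have hshift := (hasSum_nat_add_iff' 1).2 hS
  rw [sum_range_one, poch_zero, Nat.factorial_zero, Nat.cast_one, div_one, pow_zero,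
    mul_one] at hshift
  rcases eq_or_ne y 0 with rfl | hy0
  · convert hasSum_single (f := fun n : ℕ => poch (1 / 2) (n + 1) / (n + 1)! * (0 : ℝ) ^ n) 0
      fun n hn => by simp [zero_pow hn] using 1
    norm_num [poch]
  · have hs : 0 < √(1 - y) := sqrt_pos.2 (by linarith [le_abs_self y])
    have hsq : √(1 - y) ^ 2 = 1 - y := sq_sqrt (by linarith [le_abs_self y])
    have hterm (n : ℕ) : poch (1 / 2) (n + 1) / (n + 1)! * y ^ (n + 1) / y =
        poch (1 / 2) (n + 1) / (n + 1)! * y ^ n := by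
      field_simp
      ring
    -- `y = (1 - √(1 - y)) * (1 + √(1 - y))`
    have hval : (1 / √(1 - y) - 1) / y = 1 / (√(1 - y) * (1 + √(1 - y))) := by
      field_simp
      linear_combination -hsq
    simpa only [hterm, hval] using hshift.div_const y

theorem hasDerivAt_neg_two_mul_log_one_add_sqrt_one_sub_div_two {y : ℝ} (hy : y < 1) :
    HasDerivAt (fun z => -2 * log ((1 + √(1 - z)) / 2))
      (1 / (√(1 - y) * (1 + √(1 - y)))) y := by
  have hs : 0 < √(1 - y) := sqrt_pos.2 (by linarith)
  have hsqrt := ((hasDerivAt_id' y).const_sub 1).sqrt (by linarith)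
  refine ((((hsqrt.const_add 1).div_const 2).log (by positivity)).const_mul (-2)).congr_deriv ?_
  field_simp

theorem hasSum_poch_half_div_succ_mul_pow_succ {y : ℝ} (hy : |y| < 1) :
    HasSum (fun n : ℕ => poch (1 / 2) (n + 1) / (n + 1)! / (n + 1) * y ^ (n + 1))
      (-2 * log ((1 + √(1 - y)) / 2)) := by
  set a : ℕ → ℝ := fun n => poch (1 / 2) (n + 1) / (n + 1)!
  have ha (n : ℕ) : |a n| ≤ 1 := abs_poch_div_factorial_le_one (by norm_num) (by norm_num) _
  have hball {z : ℝ} : z ∈ Metric.ball 0 1 ↔ |z| < 1 := by rw [mem_ball_zero_iff, norm_eq_abs]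
  have hseries {z : ℝ} (hz : z ∈ Metric.ball 0 1) :
      HasDerivAt (fun z => ∑' n : ℕ, a n / (n + 1) * z ^ (n + 1))
        (1 / (√(1 - z) * (1 + √(1 - z)))) z := by
    rw [← (hasSum_poch_half_succ_div_factorial_mul_pow (hball.1 hz)).tsum_eq]
    exact hasDerivAt_tsum_div_succ_mul_pow_succ ha (hball.1 hz)
  have hlog {z : ℝ} (hz : z ∈ Metric.ball 0 1) :=
    hasDerivAt_neg_two_mul_log_one_add_sqrt_one_sub_div_two (abs_lt.1 (hball.1 hz)).2
  have heq := Metric.isOpen_ball.eqOn_of_deriv_eq (convex_ball 0 1).isPreconnected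
    (fun z hz => (hseries hz).differentiableAt.differentiableWithinAt)
    (fun z hz => (hlog hz).differentiableAt.differentiableWithinAt)
    (fun z hz => (hseries hz).deriv.trans (hlog hz).deriv.symm) (Metric.mem_ball_self one_pos)
    (by simp) (hball.2 hy)
  simpa only [← heq] using (summable_div_succ_mul_pow_succ ha hy).hasSum

theorem stmt13 (x : ℝ) (hx0 : 0 < x) (hx1 : x < 1) :
    HasSum (fun j : ℕ =>
        poch (1/2) (j + 1) / (((j : ℝ) + 1) * (Nat.factorial (j + 1) : ℝ)) * x ^ (j + 1))
      (2 * Real.log (2 / (1 + Real.sqrt (1 - x))))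
    ∧ HasSum (fun j : ℕ =>
        poch (1/2) (j + 1) / (((j : ℝ) + 1) * (Nat.factorial (j + 1) : ℝ)) * (-x) ^ (j + 1))
      (-2 * Real.log ((1 + Real.sqrt (1 + x)) / 2)) := by
  have hcoeff (j : ℕ) : poch (1/2) (j + 1) / (((j : ℝ) + 1) * (Nat.factorial (j + 1) : ℝ)) =
      poch (1 / 2) (j + 1) / (j + 1)! / (j + 1) := by
    rw [div_div, mul_comm]
  simp only [hcoeff]
  constructor
  · rw [← inv_div (1 + _), log_inv, mul_neg, ← neg_mul]
    exact hasSum_poch_half_div_succ_mul_pow_succ (abs_lt.2 ⟨by linarith, hx1⟩)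
  · simpa only [sub_neg_eq_add] using
      hasSum_poch_half_div_succ_mul_pow_succ (y := -x) (abs_lt.2 ⟨by linarith, by linarith⟩)
end
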